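/- arXiv:2004.00522 — 3 statements merged into one kernel-verified Lean document; each statement's English description precedes it below -/
import Mathlib

section
/- Let G be a finite group and ρ : G →* GL(V) a faithful representation on a finite-dimensional complex vector space V. Then the diagonal representation of G on V × V, where g acts by (v, w) ↦ (ρ(g) v, ρ(g) w), is faithful and contains no pseudoreflections: for every g ∈ G with g ≠ 1, the subspace of vectors of V × V fixed by the diagonal action of g has complex codimension at least 2. -/
/-!
The fixed space of `g` on `V × V` is the square of its fixed space on `V`, so its codimension
is twice the codimension on `V`; by faithfulness `ρ g ≠ 1` for `g ≠ 1`, so the latter is positive.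
-/

namespace LinearMap

theorem prodMap_self_injective {R M N : Type*} [Semiring R] [AddCommMonoid M] [AddCommMonoid N]
    [Module R M] [Module R N] : Function.Injective fun f : M →ₗ[R] N => f.prodMap f :=
  fun _ _ h => ext fun x => congrArg (fun F : M × M →ₗ[R] N × N => (F (x, 0)).1) h

theorem prodMap_self_sub_id {R M : Type*} [Ring R] [AddCommGroup M] [Module R M]
    (f : Module.End R M) : f.prodMap f - id = (f - id).prodMap (f - id) :=
  rfl

end LinearMap

namespace Submodule

variable {R M N : Type*} [Ring R] [AddCommGroup M] [AddCommGroup N] [Module R M] [Module R N]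

noncomputable def quotientProdEquiv (p : Submodule R M) (q : Submodule R N) :
    ((M × N) ⧸ p.prod q) ≃ₗ[R] (M ⧸ p) × (N ⧸ q) :=
  (quotEquivOfEq _ _ (by simp)).trans <| (p.mkQ.prodMap q.mkQ).quotKerEquivOfSurjective <|
    Prod.map_surjective.2 ⟨p.mkQ_surjective, q.mkQ_surjective⟩

theorem finrank_quotient_prod {K : Type*} [DivisionRing K] [Module K M] [Module K N]
    [FiniteDimensional K M] [FiniteDimensional K N] (p : Submodule K M) (q : Submodule K N) :
    Module.finrank K ((M × N) ⧸ p.prod q) =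
      Module.finrank K (M ⧸ p) + Module.finrank K (N ⧸ q) := by
  rw [(quotientProdEquiv p q).finrank_eq, Module.finrank_prod]

end Submodule

namespace LinearMap

variable {K V : Type*} [DivisionRing K] [AddCommGroup V] [Module K V] [FiniteDimensional K V]

theorem finrank_quotient_ker_prodMap_self_sub_id (f : Module.End K V) :
    Module.finrank K ((V × V) ⧸ ker (f.prodMap f - id)) =
      2 * Module.finrank K (V ⧸ ker (f - id)) := by
  rw [prodMap_self_sub_id, ker_prodMap, Submodule.finrank_quotient_prod, two_mul]

theorem finrank_quotient_ker_sub_id_pos {f : Module.End K V} (hf : f ≠ id) :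
    0 < Module.finrank K (V ⧸ ker (f - id)) := by
  have : Nontrivial (V ⧸ ker (f - id)) := by
    rwa [Submodule.Quotient.nontrivial_iff, ne_eq, ker_eq_top, sub_eq_zero]
  exact Module.finrank_pos

end LinearMap

theorem doubled_rep_has_no_pseudoreflections_general
    (G : Type) [Group G]
    (V : Type) [AddCommGroup V] [Module ℂ V] [FiniteDimensional ℂ V]
    (ρ : G →* (V ≃ₗ[ℂ] V)) (hρ : Function.Injective ρ) :
    Function.Injective
      (fun g : G => LinearMap.prodMap (ρ g : V →ₗ[ℂ] V) (ρ g : V →ₗ[ℂ] V)) ∧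
    ∀ g : G, g ≠ 1 →
      2 ≤ Module.finrank ℂ
        ((V × V) ⧸ LinearMap.ker
          (LinearMap.prodMap (ρ g : V →ₗ[ℂ] V) (ρ g : V →ₗ[ℂ] V) - LinearMap.id)) := by
  have hρ' : Function.Injective fun g => (ρ g : V →ₗ[ℂ] V) :=
    LinearEquiv.toLinearMap_injective.comp hρ
  refine ⟨LinearMap.prodMap_self_injective.comp hρ', fun g hg => ?_⟩
  have hρg : (ρ g : V →ₗ[ℂ] V) ≠ LinearMap.id := fun h => hg (hρ' (by simpa using h))
  rw [LinearMap.finrank_quotient_ker_prodMap_self_sub_id]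
  have := LinearMap.finrank_quotient_ker_sub_id_pos hρg
  omega

/-- If `ρ : G →* GL(V)` is a faithful representation of a finite group `G` on a
finite-dimensional complex vector space `V`, then the diagonal representation of `G`
on `V × V` (where `g` acts by `(v, w) ↦ (ρ g v, ρ g w)`) is faithful and contains no
pseudoreflections: for `g ≠ 1`, the fixed subspace of the diagonal action of `g` has
complex codimension at least `2` in `V × V`. -/
theorem doubled_rep_has_no_pseudoreflections
    (G : Type) [Group G] [Finite G]
    (V : Type) [AddCommGroup V] [Module ℂ V] [FiniteDimensional ℂ V]
    (ρ : G →* (V ≃ₗ[ℂ] V)) (hρ : Function.Injective ρ) :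
    Function.Injective
      (fun g : G => LinearMap.prodMap (ρ g : V →ₗ[ℂ] V) (ρ g : V →ₗ[ℂ] V)) ∧
    ∀ g : G, g ≠ 1 →
      2 ≤ Module.finrank ℂ
        ((V × V) ⧸ LinearMap.ker
          (LinearMap.prodMap (ρ g : V →ₗ[ℂ] V) (ρ g : V →ₗ[ℂ] V) - LinearMap.id)) :=
  doubled_rep_has_no_pseudoreflections_general G V ρ hρ
end

section
/- Let U' ⊆ ℂⁿ and V' ⊆ ℂⁿ be connected open sets, let G and H be finite groups of biholomorphic automorphisms of U' and V' respectively, let Z be a topological space, and let φ : U' → Z and ψ : V' → Z be continuous proper maps with finite fibers such that φ ∘ g = φ for all g ∈ G and ψ ∘ h = ψ for all h ∈ H, the images U := φ(U') and V := ψ(V') are open, the induced maps U'/G → U and V'/H → V are homeomorphisms, and U ⊆ V. If λ, μ : U' → V' are two injections, i.e. injective holomorphic maps satisfying ψ ∘ λ = φ and ψ ∘ μ = φ, then there exists a unique h ∈ H such that h ∘ λ = μ. Moreover, for every g ∈ G there is a unique element λ(g) ∈ H with λ ∘ g = λ(g) ∘ λ, and the resulting map G → H, g ↦ λ(g), is an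 injective group homomorphism. -/
/-!
The fibres of `ψ` over `U` are `H`-orbits, so for every `x ∈ U'` some `h ∈ H` maps `λ x` to
`μ x`. Finitely many closed sets `{x | h (λ x) = μ x}` cover `U'`, so by Baire one of them
contains a nonempty open set, and the identity theorem (proved along complex lines) spreads
`h ∘ λ = μ` over the connected `U'`. If `h ∘ λ = h' ∘ λ`, then `k = h⁻¹ h'` fixes `λ(U')`
pointwise; the translates of `λ(U')` cover the open set `ψ⁻¹(U)`, so by the same Baire and
identity-theorem argument some conjugate of `k` is the identity on `V'`, and `k = 1` by
faithfulness. Applied to `μ = λ ∘ g` this yields `λ(g)`, which is multiplicative by uniqueness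
and injective because `λ` is.
-/

/-- The map `U'/G → Z` induced by a `G`-invariant map `φ : U' → Z`, where `U'/G` is the
quotient of the chart `U'` by the orbit relation of the local uniformizing group `G`. -/
def orbifoldChartQuotientMap {n : ℕ} {Z : Type} (U' : Set (Fin n → ℂ)) {G : Type} [Group G]
    (actG : G →* Equiv.Perm ↥U') (φ : (Fin n → ℂ) → Z)
    (hinv : ∀ (g : G) (x : ↥U'), φ (actG g x).val = φ x.val) :
    Quot (fun x y : ↥U' => ∃ g : G, actG g x = y) → Z :=
  Quot.lift (fun x : ↥U' => φ x.val) (by rintro a b ⟨g, rfl⟩; exact (hinv g a).symm)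

open Set Filter Topology Metric Function

section IdentityTheorem

variable {E F : Type*} [NormedAddCommGroup E] [NormedSpace ℂ E]
  [NormedAddCommGroup F] [NormedSpace ℂ F] [CompleteSpace F] {f g : E → F}

theorem DifferentiableOn.eqOn_ball_of_eventuallyEq {a : E} {r : ℝ}
    (hf : DifferentiableOn ℂ f (ball a r)) (hg : DifferentiableOn ℂ g (ball a r))
    (hfg : f =ᶠ[𝓝 a] g) : EqOn f g (ball a r) := by
  intro q hq
  obtain rfl | hqa := eq_or_ne q a
  · exact hfg.eq_of_nhds
  -- on the complex line `t ↦ a + t • (q - a)` the one-variable identity theorem applies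
  have hv : 0 < ‖q - a‖ := norm_pos_iff.2 (sub_ne_zero.2 hqa)
  set ℓ : ℂ → E := fun t => a + t • (q - a)
  have hℓ : Differentiable ℂ ℓ := (differentiable_id.smul_const _).const_add a
  have hmaps : MapsTo ℓ (ball 0 (r / ‖q - a‖)) (ball a r) := by
    intro t ht
    rw [mem_ball_zero_iff, lt_div_iff₀ hv] at ht
    simpa [ℓ, norm_smul, dist_eq_norm] using ht
  have h1 : (1 : ℂ) ∈ ball 0 (r / ‖q - a‖) := by
    rw [mem_ball_zero_iff, norm_one, one_lt_div hv, ← dist_eq_norm]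
    exact hq
  have h0 : (0 : ℂ) ∈ ball 0 (r / ‖q - a‖) := mem_ball_self (pos_of_mem_ball h1)
  have hana {k : E → F} (hk : DifferentiableOn ℂ k (ball a r)) :
      AnalyticOnNhd ℂ (k ∘ ℓ) (ball 0 (r / ‖q - a‖)) :=
    (hk.comp hℓ.differentiableOn hmaps).analyticOnNhd isOpen_ball
  have hℓ0 : Tendsto ℓ (𝓝 0) (𝓝 a) := by simpa [ℓ] using hℓ.continuous.tendsto 0
  simpa [ℓ] using (hana hf).eqOn_of_preconnected_of_eventuallyEq (hana hg)
    (convex_ball _ _).isPreconnected h0 (hfg.comp_tendsto hℓ0) h1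

theorem DifferentiableOn.eqOn_of_preconnected_of_eventuallyEq {U : Set E}
    (hf : DifferentiableOn ℂ f U) (hg : DifferentiableOn ℂ g U) (hU : IsOpen U)
    (hU' : IsPreconnected U) {z₀ : E} (h₀ : z₀ ∈ U) (hfg : f =ᶠ[𝓝 z₀] g) : EqOn f g U := by
  suffices U ⊆ {z | f =ᶠ[𝓝 z] g} from fun z hz => (this hz).eq_of_nhds
  refine hU'.subset_of_closure_inter_subset isOpen_setOfPred_eventually_nhds
    ⟨z₀, h₀, hfg⟩ ?_
  rintro z ⟨hz, hzU⟩
  obtain ⟨r, hr, hrU⟩ := Metric.isOpen_iff.1 hU z hzU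
  obtain ⟨w, hw, hzw⟩ := Metric.mem_closure_iff.1 hz (r / 2) (half_pos hr)
  have hball : ball w (r / 2) ⊆ U :=
    (ball_subset_ball' (by rw [dist_comm]; linarith)).trans hrU
  exact eventually_of_mem (isOpen_ball.mem_nhds (mem_ball.2 hzw))
    ((hf.mono hball).eqOn_ball_of_eventuallyEq (hg.mono hball) hw)

theorem DifferentiableOn.exists_eqOn_of_forall_exists_eq [CompleteSpace E] {ι : Type*}
    [Finite ι] {f g : ι → E → F} {U W : Set E} (hU : IsOpen U) (hU' : IsPreconnected U)
    (hf : ∀ i, DifferentiableOn ℂ (f i) U) (hg : ∀ i, DifferentiableOn ℂ (g i) U)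
    (hW : IsOpen W) (hWne : W.Nonempty) (hWU : W ⊆ U)
    (hcover : ∀ x ∈ W, ∃ i, f i x = g i x) : ∃ i, EqOn (f i) (g i) U := by
  have := hW.baireSpace
  have := hWne.to_subtype
  have hclosed (i : ι) : IsClosed {x : W | f i x = g i x} :=
    isClosed_eq ((hf i).mono hWU).continuousOn.domRestrict
      ((hg i).mono hWU).continuousOn.domRestrict
  obtain ⟨i, p, hp⟩ := nonempty_interior_of_iUnion_of_closed hclosed
    (eq_univ_of_forall fun x => mem_iUnion.2 (hcover x x.2))
  have hfg : f i =ᶠ[𝓝 p.1] g i := by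
    filter_upwards [(hW.isOpenMap_subtype_val _ isOpen_interior).mem_nhds ⟨p, hp, rfl⟩]
    rintro _ ⟨y, hy, rfl⟩
    exact (interior_subset hy : y ∈ {x : W | f i x = g i x})
  exact ⟨i, (hf i).eqOn_of_preconnected_of_eventuallyEq (hg i) hU hU' (hWU p.2) hfg⟩

end IdentityTheorem

section ChartInjection

variable {E Z H : Type*} [NormedAddCommGroup E] [NormedSpace ℂ E] [CompleteSpace E]
  [TopologicalSpace Z] [Group H] [Finite H] {V' : Set E} {actH : H →* Equiv.Perm V'}
  {F : H → E → E} {ψ : E → Z}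

theorem eq_one_of_forall_act_eq_self (hV' : IsOpen V') (hV'c : IsPreconnected V')
    (hfaithful : Injective actH) (hF : ∀ h, DifferentiableOn ℂ (F h) V')
    (hFact : ∀ h (y : V'), F h y = actH h y) (hψ : ContinuousOn ψ V')
    (hfib : ∀ y₁ y₂ : V', ψ y₁ = ψ y₂ → ∃ h, actH h y₁ = y₂)
    {T : Set E} (hTV : T ⊆ V') (hTne : T.Nonempty) (hT : IsOpen (ψ '' T))
    {k : H} (hk : ∀ y : V', (y : E) ∈ T → actH k y = y) : k = 1 := by
  -- the open set `V' ∩ ψ⁻¹(ψ T)` is the union of the translates of `T`,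
  -- and `h k h⁻¹` fixes the translate `h • T` pointwise
  have hcover : ∀ y ∈ V' ∩ ψ ⁻¹' (ψ '' T), ∃ h : H, F (h * k * h⁻¹) y = id y := by
    rintro y ⟨hyV, t, htT, hty⟩
    obtain ⟨h, hh⟩ := hfib ⟨t, hTV htT⟩ ⟨y, hyV⟩ hty
    refine ⟨h, ?_⟩
    rw [show y = ((⟨y, hyV⟩ : V') : E) from rfl, hFact, ← hh]
    simp [hk ⟨t, hTV htT⟩ htT]
  obtain ⟨h, hid⟩ := DifferentiableOn.exists_eqOn_of_forall_exists_eq hV' hV'c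
    (fun _ => hF _) (fun _ => differentiableOn_id) (hψ.isOpen_inter_preimage hV' hT)
    (hTne.mono fun t ht => ⟨hTV ht, mem_image_of_mem ψ ht⟩) inter_subset_left hcover
  have hconj : actH (h * k * h⁻¹) = 1 :=
    Equiv.ext fun y => Subtype.ext ((hFact _ y).symm.trans (hid y.2))
  exact conj_eq_one_iff.1 (hfaithful (hconj.trans (map_one actH).symm))

theorem existsUnique_act_comp_eq {U' : Set E} (hU' : IsOpen U') (hU'c : IsConnected U')
    (hV' : IsOpen V') (hV'c : IsPreconnected V') (hfaithful : Injective actH)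
    (hF : ∀ h, DifferentiableOn ℂ (F h) V') (hFact : ∀ h (y : V'), F h y = actH h y)
    (hψ : ContinuousOn ψ V') (hfib : ∀ y₁ y₂ : V', ψ y₁ = ψ y₂ → ∃ h, actH h y₁ = y₂)
    {φ : E → Z} (hφ : IsOpen (φ '' U')) {lam mu : E → E}
    (hlamMaps : MapsTo lam U' V') (hmuMaps : MapsTo mu U' V')
    (hlamHol : DifferentiableOn ℂ lam U') (hmuHol : DifferentiableOn ℂ mu U')
    (hlamComp : ∀ x ∈ U', ψ (lam x) = φ x) (hmuComp : ∀ x ∈ U', ψ (mu x) = φ x) :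
    ∃! h : H, ∀ (x : E) (hx : x ∈ U'), (actH h ⟨lam x, hlamMaps hx⟩ : E) = mu x := by
  have hcover (x : E) (hx : x ∈ U') : ∃ h : H, F h (lam x) = mu x := by
    obtain ⟨h, hh⟩ := hfib ⟨lam x, hlamMaps hx⟩ ⟨mu x, hmuMaps hx⟩
      ((hlamComp x hx).trans (hmuComp x hx).symm)
    exact ⟨h, (hFact h _).trans (congrArg Subtype.val hh)⟩
  obtain ⟨h, hh⟩ := DifferentiableOn.exists_eqOn_of_forall_exists_eq hU' hU'c.isPreconnected
    (fun h => (hF h).comp hlamHol hlamMaps) (fun _ => hmuHol) hU' hU'c.nonempty subset_rfl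
    hcover
  have hact (x : E) (hx : x ∈ U') : (actH h ⟨lam x, hlamMaps hx⟩ : E) = mu x :=
    (hFact h _).symm.trans (hh hx)
  refine ⟨h, hact, fun h' hact' => (inv_mul_eq_one.1 ?_).symm⟩
  have hψT : ψ '' (lam '' U') = φ '' U' := by
    rw [image_image]
    exact image_congr hlamComp
  refine eq_one_of_forall_act_eq_self hV' hV'c hfaithful hF hFact hψ hfib
    (image_subset_iff.2 hlamMaps) (hU'c.nonempty.image lam) (hψT ▸ hφ) ?_
  rintro ⟨_, hy⟩ ⟨x, hx, rfl⟩
  rw [map_mul, map_inv, Equiv.Perm.mul_apply, Equiv.Perm.inv_eq_iff_eq]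
  exact Subtype.ext ((hact' x hx).trans (hact x hx).symm)

end ChartInjection

theorem exists_act_eq_of_orbifoldChartQuotientMap_injective {n : ℕ} {Z : Type}
    {V' : Set (Fin n → ℂ)} {H : Type} [Group H] {actH : H →* Equiv.Perm V'}
    {ψ : (Fin n → ℂ) → Z} {hψinv : ∀ (h : H) (y : V'), ψ (actH h y) = ψ y}
    (hq : Injective (orbifoldChartQuotientMap V' actH ψ hψinv)) (y₁ y₂ : V')
    (hy : ψ y₁ = ψ y₂) : ∃ h, actH h y₁ = y₂ := by
  have horbit : Equivalence fun y₁ y₂ : V' => ∃ h, actH h y₁ = y₂ :=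
    ⟨fun y => ⟨1, by simp⟩, fun ⟨h, hh⟩ => ⟨h⁻¹, by simp [← hh]⟩,
      fun ⟨h₁, hh₁⟩ ⟨h₂, hh₂⟩ => ⟨h₂ * h₁, by simp [hh₁, hh₂]⟩⟩
  exact horbit.eqvGen_iff.1
    (Quot.eqvGen_exact (hq (a₁ := Quot.mk _ y₁) (a₂ := Quot.mk _ y₂) hy))

theorem exists_injective_monoidHom_semiconj {α β G H : Type*} [Group G] [Group H]
    {actG : G →* Equiv.Perm α} {actH : H →* Equiv.Perm β} {f : α → β} (hf : Injective f)
    (hfaithful : Injective actG) (hsemiconj : ∀ g, ∃! h, Semiconj f (actG g) (actH h)) :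
    ∃ Λ : G →* H, Injective Λ ∧ ∀ g, Semiconj f (actG g) (actH (Λ g)) := by
  choose Λ hΛ hΛuniq using hsemiconj
  let Λhom : G →* H := MonoidHom.mk' Λ fun g₁ g₂ =>
    (hΛuniq _ _ (by simpa using (hΛ g₁).comp_right (hΛ g₂))).symm
  refine ⟨Λhom, (injective_iff_map_eq_one Λhom).2 fun g hg => hfaithful ?_, hΛ⟩
  ext x
  have hfix := hΛ g x
  simp only [Λhom, MonoidHom.mk'_apply] at hg
  rw [hg, map_one] at hfix
  simpa using hf hfix

theorem Set.MapsTo.semiconj_restrict_iff {α β : Type*} {s : Set α} {t : Set β} {f : α → β}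
    (hf : MapsTo f s t) (p : Equiv.Perm s) (q : Equiv.Perm t) :
    Semiconj (hf.restrict f s t) p q ↔
      ∀ (x : α) (hx : x ∈ s), f (p ⟨x, hx⟩) = q ⟨f x, hf hx⟩ := by
  simp only [Semiconj, Subtype.forall, Subtype.ext_iff]
  rfl

theorem orbifold_chart_injection_lemma_general
    (n : ℕ) (Z : Type) [TopologicalSpace Z]
    (U' V' : Set (Fin n → ℂ))
    (hU'open : IsOpen U') (hU'conn : IsConnected U')
    (hV'open : IsOpen V') (hV'conn : IsConnected V')
    (G H : Type) [Group G] [Group H] [Finite H]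
    (actG : G →* Equiv.Perm ↥U') (actH : H →* Equiv.Perm ↥V')
    (hGfaithful : Function.Injective actG) (hHfaithful : Function.Injective actH)
    (hGhol : ∀ g : G, ∃ F : (Fin n → ℂ) → (Fin n → ℂ),
      DifferentiableOn ℂ F U' ∧ ∀ x : ↥U', F x.val = (actG g x).val)
    (hHhol : ∀ h : H, ∃ F : (Fin n → ℂ) → (Fin n → ℂ),
      DifferentiableOn ℂ F V' ∧ ∀ x : ↥V', F x.val = (actH h x).val)
    (φ ψ : (Fin n → ℂ) → Z)
    (hψproper : IsProperMap (fun x : ↥V' => ψ x.val))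
    (hφinv : ∀ (g : G) (x : ↥U'), φ (actG g x).val = φ x.val)
    (hψinv : ∀ (h : H) (x : ↥V'), ψ (actH h x).val = ψ x.val)
    (hUopen : IsOpen (φ '' U'))
    (hψquot : Topology.IsEmbedding (orbifoldChartQuotientMap V' actH ψ hψinv))
    (lam mu : (Fin n → ℂ) → (Fin n → ℂ))
    (hlamMaps : Set.MapsTo lam U' V') (hmuMaps : Set.MapsTo mu U' V')
    (hlamInj : Set.InjOn lam U')
    (hlamHol : DifferentiableOn ℂ lam U') (hmuHol : DifferentiableOn ℂ mu U')
    (hlamComp : ∀ x ∈ U', ψ (lam x) = φ x) (hmuComp : ∀ x ∈ U', ψ (mu x) = φ x) :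
    (∃! h : H, ∀ (x : Fin n → ℂ) (hx : x ∈ U'),
        (actH h ⟨lam x, hlamMaps hx⟩).val = mu x) ∧
    (∀ g : G, ∃! h : H, ∀ (x : Fin n → ℂ) (hx : x ∈ U'),
        lam (actG g ⟨x, hx⟩).val = (actH h ⟨lam x, hlamMaps hx⟩).val) ∧
    (∃ Λ : G →* H, Function.Injective Λ ∧
      ∀ (g : G) (x : Fin n → ℂ) (hx : x ∈ U'),
        lam (actG g ⟨x, hx⟩).val = (actH (Λ g) ⟨lam x, hlamMaps hx⟩).val) := by
  choose FH hFH hFHact using hHhol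
  choose FG hFG hFGact using hGhol
  have hψ : ContinuousOn ψ V' := continuousOn_iff_continuous_domRestrict.2 hψproper.continuous
  have hexistsUnique {ν : (Fin n → ℂ) → (Fin n → ℂ)} (hνMaps : MapsTo ν U' V')
      (hνHol : DifferentiableOn ℂ ν U') (hνComp : ∀ x ∈ U', ψ (ν x) = φ x) :=
    existsUnique_act_comp_eq hU'open hU'conn hV'open hV'conn.isPreconnected hHfaithful hFH
      hFHact hψ (exists_act_eq_of_orbifoldChartQuotientMap_injective hψquot.injective) hUopen
      hlamMaps hνMaps hlamHol hνHol hlamComp hνComp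
  have hFGmaps (g : G) : MapsTo (FG g) U' U' := fun x hx => hFGact g ⟨x, hx⟩ ▸ (actG g _).2
  have hsemiconj (g : G) : ∃! h : H, Semiconj (hlamMaps.restrict) (actG g) (actH h) := by
    simp_rw [hlamMaps.semiconj_restrict_iff, ← hFGact, eq_comm (a := lam _)]
    refine hexistsUnique (hlamMaps.comp (hFGmaps g)) (hlamHol.comp (hFG g) (hFGmaps g))
      fun x hx => ?_
    rw [hlamComp _ (hFGmaps g hx), hFGact g ⟨x, hx⟩, hφinv]
  obtain ⟨Λ, hΛinj, hΛ⟩ := exists_injective_monoidHom_semiconj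
    (hlamMaps.restrict_inj.2 hlamInj) hGfaithful hsemiconj
  refine ⟨hexistsUnique hmuMaps hmuHol hmuComp,
    fun g => ?_, Λ, hΛinj, fun g => (hlamMaps.semiconj_restrict_iff _ _).1 (hΛ g)⟩
  simpa only [hlamMaps.semiconj_restrict_iff] using hsemiconj g

/-- Injections between orbifold charts: given two orbifold charts `(U', G, φ, U)` and
`(V', H, ψ, V)` (with `U'`, `V'` connected open subsets of `ℂⁿ`, `G`, `H` finite groups
acting faithfully and biholomorphically, `φ`, `ψ` continuous proper invariant maps with
finite fibers, open images, inducing homeomorphisms from the quotients), with `U ⊆ V`,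
and two injections `λ, μ : U' → V'` (injective holomorphic maps with `ψ ∘ λ = φ` and
`ψ ∘ μ = φ`), there is a unique `h ∈ H` with `h ∘ λ = μ`; moreover for every `g ∈ G`
there is a unique `λ(g) ∈ H` with `λ ∘ g = λ(g) ∘ λ`, and `g ↦ λ(g)` is an injective
group homomorphism `G → H`. -/
theorem orbifold_chart_injection_lemma
    (n : ℕ) (Z : Type) [TopologicalSpace Z]
    (U' V' : Set (Fin n → ℂ))
    (hU'open : IsOpen U') (hU'conn : IsConnected U')
    (hV'open : IsOpen V') (hV'conn : IsConnected V')
    (G H : Type) [Group G] [Finite G] [Group H] [Finite H]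
    (actG : G →* Equiv.Perm ↥U') (actH : H →* Equiv.Perm ↥V')
    (hGfaithful : Function.Injective actG) (hHfaithful : Function.Injective actH)
    (hGhol : ∀ g : G, ∃ F : (Fin n → ℂ) → (Fin n → ℂ),
      DifferentiableOn ℂ F U' ∧ ∀ x : ↥U', F x.val = (actG g x).val)
    (hHhol : ∀ h : H, ∃ F : (Fin n → ℂ) → (Fin n → ℂ),
      DifferentiableOn ℂ F V' ∧ ∀ x : ↥V', F x.val = (actH h x).val)
    (φ ψ : (Fin n → ℂ) → Z)
    (hφproper : IsProperMap (fun x : ↥U' => φ x.val))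
    (hψproper : IsProperMap (fun x : ↥V' => ψ x.val))
    (hφfin : ∀ z : Z, (U' ∩ φ ⁻¹' {z}).Finite)
    (hψfin : ∀ z : Z, (V' ∩ ψ ⁻¹' {z}).Finite)
    (hφinv : ∀ (g : G) (x : ↥U'), φ (actG g x).val = φ x.val)
    (hψinv : ∀ (h : H) (x : ↥V'), ψ (actH h x).val = ψ x.val)
    (hUopen : IsOpen (φ '' U')) (hVopen : IsOpen (ψ '' V'))
    (hφquot : Topology.IsEmbedding (orbifoldChartQuotientMap U' actG φ hφinv))
    (hψquot : Topology.IsEmbedding (orbifoldChartQuotientMap V' actH ψ hψinv))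
    (hUV : φ '' U' ⊆ ψ '' V')
    (lam mu : (Fin n → ℂ) → (Fin n → ℂ))
    (hlamMaps : Set.MapsTo lam U' V') (hmuMaps : Set.MapsTo mu U' V')
    (hlamInj : Set.InjOn lam U') (hmuInj : Set.InjOn mu U')
    (hlamHol : DifferentiableOn ℂ lam U') (hmuHol : DifferentiableOn ℂ mu U')
    (hlamComp : ∀ x ∈ U', ψ (lam x) = φ x) (hmuComp : ∀ x ∈ U', ψ (mu x) = φ x) :
    (∃! h : H, ∀ (x : Fin n → ℂ) (hx : x ∈ U'),
        (actH h ⟨lam x, hlamMaps hx⟩).val = mu x) ∧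
    (∀ g : G, ∃! h : H, ∀ (x : Fin n → ℂ) (hx : x ∈ U'),
        lam (actG g ⟨x, hx⟩).val = (actH h ⟨lam x, hlamMaps hx⟩).val) ∧
    (∃ Λ : G →* H, Function.Injective Λ ∧
      ∀ (g : G) (x : Fin n → ℂ) (hx : x ∈ U'),
        lam (actG g ⟨x, hx⟩).val = (actH (Λ g) ⟨lam x, hlamMaps hx⟩).val) :=
  orbifold_chart_injection_lemma_general n Z U' V' hU'open hU'conn hV'open hV'conn G H actG actH
    hGfaithful hHfaithful hGhol hHhol φ ψ hψproper hφinv hψinv hUopen hψquot lam mu hlamMaps hmuMaps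
    hlamInj hlamHol hmuHol hlamComp hmuComp
end

section
/- Let U' ⊆ ℂⁿ be a connected open set, let G be a finite group of biholomorphic automorphisms of U', let Z be a topological space, and let φ : U' → Z be a continuous proper map with finite fibers such that φ ∘ g = φ for all g ∈ G, the image U := φ(U') is open, and the induced map U'/G → U is a homeomorphism. If λ : U' → U' is an injective holomorphic map satisfying φ ∘ λ = φ, then there exists g ∈ G with λ = g, i.e. every injection of the chart into itself is given by an element of the local uniformizing group. -/
/-- Identity theorem on a convex open set in several complex variables, proved by
restricting to complex lines. -/
lemma eqOn_of_convex_aux {E F' : Type*} [NormedAddCommGroup E] [NormedSpace ℂ E]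
    [NormedAddCommGroup F'] [NormedSpace ℂ F'] [CompleteSpace F']
    {f g : E → F'} {s : Set E} (hs : IsOpen s) (hconv : Convex ℝ s) {a : E} (ha : a ∈ s)
    (hf : DifferentiableOn ℂ f s) (hg : DifferentiableOn ℂ g s)
    (hfg : f =ᶠ[nhds a] g) : Set.EqOn f g s := by
  intro y hy
  set L : ℂ → E := fun t => a + t • (y - a) with hL
  have hLdiff : Differentiable ℂ L := by
    apply Differentiable.const_add
    exact differentiable_id.smul_const (y - a)
  set T := L ⁻¹' s with hT
  have hTopen : IsOpen T := hs.preimage hLdiff.continuous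
  have hseg : segment ℝ (0 : ℂ) 1 ⊆ T := by
    rintro t ht
    rw [segment_eq_image] at ht
    obtain ⟨u, ⟨hu0, hu1⟩, rfl⟩ := ht
    show L _ ∈ s
    have hval : L ((1 - u) • (0 : ℂ) + u • (1 : ℂ)) = (1 - u) • a + u • y := by
      have h1 : ((1 - u) • (0 : ℂ) + u • (1 : ℂ)) = (u : ℂ) := by
        simp [Complex.real_smul]
      rw [hL]
      simp only [h1]
      have h2 : (u : ℂ) • (y - a) = u • (y - a) := by
        rw [Complex.coe_smul]
      rw [h2, smul_sub, sub_smul, one_smul]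
      abel
    rw [hval]
    exact hconv ha hy (by linarith) hu0 (by ring)
  have h0T : (0 : ℂ) ∈ T := hseg (left_mem_segment ℝ 0 1)
  set C := connectedComponentIn T 0 with hC
  have hCopen : IsOpen C := hTopen.connectedComponentIn
  have hCpre : IsPreconnected C := isPreconnected_connectedComponentIn
  have hsegC : segment ℝ (0 : ℂ) 1 ⊆ C :=
    ((convex_segment (0 : ℂ) 1).isPreconnected).subset_connectedComponentIn
      (left_mem_segment ℝ 0 1) hseg
  have h0C : (0 : ℂ) ∈ C := hsegC (left_mem_segment ℝ 0 1)
  have h1C : (1 : ℂ) ∈ C := hsegC (right_mem_segment ℝ 0 1)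
  have hCT : C ⊆ T := connectedComponentIn_subset T 0
  have hfL : DifferentiableOn ℂ (f ∘ L) C :=
    hf.comp hLdiff.differentiableOn (fun t ht => hCT ht)
  have hgL : DifferentiableOn ℂ (g ∘ L) C :=
    hg.comp hLdiff.differentiableOn (fun t ht => hCT ht)
  have hL0 : L 0 = a := by simp [hL]
  have htend : Filter.Tendsto L (nhds 0) (nhds a) := by
    simpa [hL0] using hLdiff.continuous.tendsto (0 : ℂ)
  have hev : (f ∘ L) =ᶠ[nhds (0 : ℂ)] (g ∘ L) := hfg.comp_tendsto htend
  have heq : Set.EqOn (f ∘ L) (g ∘ L) C :=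
    (hfL.analyticOnNhd hCopen).eqOn_of_preconnected_of_eventuallyEq
      (hgL.analyticOnNhd hCopen) hCpre h0C hev
  have := heq h1C
  simpa [hL] using this

/-- Every injection of an orbifold chart `(U', G, φ, U)` into itself (an injective
holomorphic map `λ : U' → U'` with `φ ∘ λ = φ`) is given by an element of the local
uniformizing group `G`. -/
theorem orbifold_chart_self_injection_is_group_element
    (n : ℕ) (Z : Type) [TopologicalSpace Z]
    (U' : Set (Fin n → ℂ)) (hU'open : IsOpen U') (hU'conn : IsConnected U')
    (G : Type) [Group G] [Finite G]
    (actG : G →* Equiv.Perm ↥U') (hGfaithful : Function.Injective actG)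
    (hGhol : ∀ g : G, ∃ F : (Fin n → ℂ) → (Fin n → ℂ),
      DifferentiableOn ℂ F U' ∧ ∀ x : ↥U', F x.val = (actG g x).val)
    (φ : (Fin n → ℂ) → Z)
    (hφproper : IsProperMap (fun x : ↥U' => φ x.val))
    (hφfin : ∀ z : Z, (U' ∩ φ ⁻¹' {z}).Finite)
    (hφinv : ∀ (g : G) (x : ↥U'), φ (actG g x).val = φ x.val)
    (hUopen : IsOpen (φ '' U'))
    (hφquot : Topology.IsEmbedding (orbifoldChartQuotientMap U' actG φ hφinv))
    (lam : (Fin n → ℂ) → (Fin n → ℂ))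
    (hlamMaps : Set.MapsTo lam U' U') (hlamInj : Set.InjOn lam U')
    (hlamHol : DifferentiableOn ℂ lam U')
    (hlamComp : ∀ x ∈ U', φ (lam x) = φ x) :
    ∃ g : G, ∀ (x : Fin n → ℂ) (hx : x ∈ U'),
      (actG g ⟨x, hx⟩).val = lam x := by
  classical
  -- The orbit relation is an equivalence relation.
  set r : ↥U' → ↥U' → Prop := fun x y => ∃ g : G, actG g x = y with hr
  have hequiv : Equivalence r := by
    constructor
    · intro x; exact ⟨1, by simp⟩
    · rintro x y ⟨g, rfl⟩; exact ⟨g⁻¹, by simp [← Equiv.Perm.mul_apply, ← map_mul]⟩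
    · rintro x y z ⟨g, rfl⟩ ⟨h, rfl⟩
      exact ⟨h * g, by simp [← Equiv.Perm.mul_apply, ← map_mul]⟩
  -- Points with equal φ-value are in the same orbit.
  have horbit : ∀ x y : ↥U', φ x.val = φ y.val → ∃ g : G, actG g x = y := by
    intro x y hxy
    have h1 : Quot.mk r x = Quot.mk r y := hφquot.injective hxy
    exact (hequiv.eqvGen_iff).mp (Quot.eq.mp h1)
  -- choose holomorphic extensions
  choose F hFhol hFeq using hGhol
  -- the closed sets S_g in the subtype
  set S : G → Set ↥U' := fun g => {x : ↥U' | F g x.val = lam x.val} with hS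
  have hSclosed : ∀ g, IsClosed (S g) := fun g =>
    isClosed_eq ((hFhol g).continuousOn.restrict) (hlamHol.continuousOn.restrict)
  have hcover : ⋃ g, S g = Set.univ := by
    ext x
    simp only [Set.mem_iUnion, Set.mem_univ, iff_true]
    have hx' : lam x.val ∈ U' := hlamMaps x.2
    obtain ⟨g, hg⟩ := horbit x ⟨lam x.val, hx'⟩ (hlamComp x.val x.2).symm
    refine ⟨g, ?_⟩
    have := congrArg Subtype.val hg
    simp only [hS, Set.mem_setOf_eq, hFeq g x]
    exact this
  -- Baire category: some S_g has nonempty interior.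
  have : Nonempty ↥U' := hU'conn.nonempty.to_subtype
  have hloc : LocallyCompactSpace ↥U' := hU'open.locallyCompactSpace
  obtain ⟨g, x₀, hx₀⟩ := nonempty_interior_of_iUnion_of_closed hSclosed hcover
  -- turn this into a neighborhood statement in ℂⁿ
  obtain ⟨V, hVopen, hVeq⟩ := isOpen_induced_iff.mp (isOpen_interior (s := S g))
  have hx₀V : x₀.val ∈ V ∩ U' := ⟨by rw [← Set.mem_preimage, hVeq]; exact hx₀, x₀.2⟩
  have hfg : F g =ᶠ[nhds x₀.val] lam := by
    filter_upwards [(hVopen.inter hU'open).mem_nhds hx₀V] with y hy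
    have hmem : (⟨y, hy.2⟩ : ↥U') ∈ interior (S g) := by
      rw [← hVeq]; exact hy.1
    have hmem' : (⟨y, hy.2⟩ : ↥U') ∈ S g := interior_subset hmem
    simpa [hS] using hmem'
  -- propagate via connectedness, using the identity theorem on balls
  set A : Set (Fin n → ℂ) := {x | ∀ᶠ y in nhds x, F g y = lam y} with hA
  have hAopen : IsOpen A := isOpen_setOf_eventually_nhds
  have hx₀A : x₀.val ∈ A := hfg
  have hBopen : IsOpen (U' \ A) := by
    rw [Metric.isOpen_iff]
    intro x hx
    obtain ⟨ε, hε, hball⟩ := Metric.isOpen_iff.mp hU'open x hx.1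
    refine ⟨ε / 2, by linarith, fun y hy => ?_⟩
    have hyU : y ∈ U' := hball (Metric.ball_subset_ball (by linarith) hy)
    refine ⟨hyU, fun hyA => hx.2 ?_⟩
    -- y ∈ A; propagate to x via the ball around y
    set ρ := ε - dist y x with hρ
    have hdyx : dist y x < ε / 2 := hy
    have hρpos : ε / 2 < ρ := by rw [hρ]; linarith
    have hsub : Metric.ball y ρ ⊆ U' := by
      refine (Metric.ball_subset_ball' ?_).trans hball
      rw [hρ]; ring_nf; rfl
    have hxball : x ∈ Metric.ball y ρ := by
      rw [Metric.mem_ball, dist_comm]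
      calc dist y x < ε / 2 := hdyx
        _ < ρ := hρpos
    have hyball : y ∈ Metric.ball y ρ := Metric.mem_ball_self (by linarith)
    have heqB : Set.EqOn (F g) lam (Metric.ball y ρ) :=
      eqOn_of_convex_aux Metric.isOpen_ball (convex_ball y ρ) hyball
        ((hFhol g).mono hsub) (hlamHol.mono hsub) hyA
    filter_upwards [Metric.isOpen_ball.mem_nhds hxball] with z hz
    exact heqB hz
  -- connectedness forces A ⊇ U'
  have hall : ∀ x ∈ U', x ∈ A := by
    by_contra hcon
    push_neg at hcon
    obtain ⟨x, hxU, hxA⟩ := hcon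
    obtain ⟨z, hz⟩ := hU'conn.isPreconnected A (U' \ A) hAopen hBopen
      (fun w hw => by by_cases h : w ∈ A; exact Or.inl h; exact Or.inr ⟨hw, h⟩)
      ⟨x₀.val, x₀.2, hx₀A⟩ ⟨x, hxU, hxU, hxA⟩
    exact hz.2.2.2 hz.2.1
  refine ⟨g, fun x hx => ?_⟩
  rw [← hFeq g ⟨x, hx⟩]
  exact Filter.EventuallyEq.eq_of_nhds (hall x hx)
end
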